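/- Let κ ≥ 2 and z ∈ ℂ with |z| < κ + 1 and z ∉ [−2√κ, 2√κ]. Define F_z(w) = ((w² − 1)² / ((w² − κ)(w² − 1/κ))) · 1/(√κ(w² + 1) − z w). Then F_z has simple poles at w = ±1/√κ inside the unit disc, with residues Res(F_z, ±κ^{−1/2}) = ±(1 − κ)/(2(1 + κ)(1 + κ ∓ z)). -/

import Mathlib

/-!
At `p = ±1/√κ` the factor `w² − 1/κ = (w − p)(w + p)` of the denominator of `F_z` vanishes
simply, while the rest of `F_z` is regular there: `p² − κ = (1 − κ)(1 + κ)/κ ≠ 0`, and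
`√κ(p² + 1) − zp = (1 + κ ∓ z)/√κ ≠ 0` because `|z| < κ + 1`. So the residue is the value
of the remaining factor at `p` divided by `2p`, which simplifies to
`±(1 − κ)/(2(1 + κ)(1 + κ ∓ z))`.
-/

open Filter Topology

theorem tendsto_sub_mul_div_sq_sub_sq {𝕜 : Type*} [NormedField 𝕜] {f : 𝕜 → 𝕜} {p : 𝕜}
    (hf : ContinuousAt f p) (hp : 2 * p ≠ 0) :
    Tendsto (fun w => (w - p) * (f w / (w ^ 2 - p ^ 2))) (𝓝[≠] p) (𝓝 (f p / (2 * p))) := by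
  have hcont : ContinuousAt (fun w => f w / (w + p)) p :=
    hf.div (by fun_prop) (by rwa [← two_mul])
  rw [two_mul]
  refine (hcont.tendsto.mono_left nhdsWithin_le_nhds).congr' ?_
  filter_upwards [self_mem_nhdsWithin] with w hw
  rw [sq_sub_sq, ← div_div, mul_div_cancel₀ _ (sub_ne_zero.2 hw)]

/-- The integrand `F_z` of Section 4.2, with `s` standing for `√κ`. -/
noncomputable def contourIntegrand (κ s z w : ℂ) : ℂ :=
  ((w ^ 2 - 1) ^ 2 / ((w ^ 2 - κ) * (w ^ 2 - 1 / κ))) * (1 / (s * (w ^ 2 + 1) - z * w))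

theorem tendsto_sub_mul_contourIntegrand {κ s z ε : ℂ} (hs : s ^ 2 = κ) (hs0 : s ≠ 0)
    (hκ : κ ^ 2 ≠ 1) (hε : ε ^ 2 = 1) (hz : 1 + κ - ε * z ≠ 0) :
    Tendsto (fun w => (w - ε / s) * contourIntegrand κ s z w) (𝓝[≠] (ε / s))
      (𝓝 (ε * (1 - κ) / (2 * (1 + κ) * (1 + κ - ε * z)))) := by
  set p := ε / s with hp
  have hκ0 : κ ≠ 0 := hs ▸ pow_ne_zero 2 hs0
  have hκ_add : 1 + κ ≠ 0 := fun h => hκ (by rw [eq_neg_of_add_eq_zero_right h]; norm_num)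
  have hκ_sub : 1 - κ ≠ 0 := fun h => hκ (by rw [← sub_eq_zero.1 h]; norm_num)
  have hε0 : ε ≠ 0 := by rintro rfl; norm_num at hε
  have hp2 : p ^ 2 = 1 / κ := by rw [hp, div_pow, hε, hs]
  have hpole : p ^ 2 - κ = (1 - κ) * (1 + κ) / κ := by
    rw [hp2]
    field_simp
    ring
  have hden : s * (p ^ 2 + 1) - z * p = (1 + κ - ε * z) / s := by
    rw [hp2, hp]
    field_simp
    linear_combination (κ + 1) * hs
  have hcont : ContinuousAt
      (fun w => (w ^ 2 - 1) ^ 2 / (w ^ 2 - κ) * (1 / (s * (w ^ 2 + 1) - z * w))) p :=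
    .mul (.div (by fun_prop) (by fun_prop)
        (by rw [hpole]; exact div_ne_zero (mul_ne_zero hκ_sub hκ_add) hκ0))
      (.div (by fun_prop) (by fun_prop) (by rw [hden]; exact div_ne_zero hz hs0))
  have H := tendsto_sub_mul_div_sq_sub_sq hcont (mul_ne_zero two_ne_zero (div_ne_zero hε0 hs0))
  convert H using 2 with w
  · rw [contourIntegrand, hp2, div_mul_eq_div_div, div_mul_eq_mul_div, div_mul_eq_mul_div]
  · rw [hden, hpole, hp2, hp]
    field_simp
    linear_combination κ * hε - hs

theorem free_laplacian_contour_residues_general (κ : ℕ) (hκ : 2 ≤ κ) (z : ℂ)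
    (hz1 : ‖z‖ < (κ : ℝ) + 1) :
    ‖(1 : ℂ) / (Real.sqrt κ : ℂ)‖ < 1 ∧
    Tendsto
      (fun w : ℂ => (w - 1 / (Real.sqrt κ : ℂ)) *
        (((w ^ 2 - 1) ^ 2 / ((w ^ 2 - (κ : ℂ)) * (w ^ 2 - 1 / (κ : ℂ)))) *
          (1 / ((Real.sqrt κ : ℂ) * (w ^ 2 + 1) - z * w))))
      (𝓝[≠] (1 / (Real.sqrt κ : ℂ)))
      (𝓝 ((1 - (κ : ℂ)) / (2 * (1 + (κ : ℂ)) * (1 + (κ : ℂ) - z)))) ∧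
    Tendsto
      (fun w : ℂ => (w + 1 / (Real.sqrt κ : ℂ)) *
        (((w ^ 2 - 1) ^ 2 / ((w ^ 2 - (κ : ℂ)) * (w ^ 2 - 1 / (κ : ℂ)))) *
          (1 / ((Real.sqrt κ : ℂ) * (w ^ 2 + 1) - z * w))))
      (𝓝[≠] (-(1 / (Real.sqrt κ : ℂ))))
      (𝓝 (-((1 - (κ : ℂ)) / (2 * (1 + (κ : ℂ)) * (1 + (κ : ℂ) + z))))) := by
  have hs1 : 1 < Real.sqrt κ := Real.lt_sqrt zero_le_one |>.2 (by norm_num; exact_mod_cast hκ)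
  have hs : (Real.sqrt κ : ℂ) ^ 2 = κ := by
    rw [← Complex.ofReal_pow, Real.sq_sqrt (Nat.cast_nonneg _), Complex.ofReal_natCast]
  have hs0 : (Real.sqrt κ : ℂ) ≠ 0 := Complex.ofReal_ne_zero.2 (by positivity)
  have hκ2 : (κ : ℂ) ^ 2 ≠ 1 := by exact_mod_cast (by nlinarith : κ ^ 2 ≠ 1)
  have hz : ∀ ε : ℂ, ‖ε‖ = 1 → 1 + κ - ε * z ≠ 0 := by
    intro ε hε h
    have := congrArg norm (sub_eq_zero.1 h)
    rw [norm_mul, hε, one_mul, add_comm, ← Nat.cast_add_one, Complex.norm_natCast,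
      Nat.cast_add_one] at this
    exact hz1.ne' this
  refine ⟨?_, ?_, ?_⟩
  · rw [norm_div, norm_one, Complex.norm_real, Real.norm_of_nonneg (Real.sqrt_nonneg _)]
    exact (div_lt_one (by positivity)).2 hs1
  · have h := tendsto_sub_mul_contourIntegrand hs hs0 hκ2 (one_pow 2) (hz 1 norm_one)
    simp only [one_mul] at h
    exact h
  · have h := tendsto_sub_mul_contourIntegrand hs hs0 hκ2 (by norm_num) (hz (-1) (by simp))
    simp only [neg_div, neg_one_mul, sub_neg_eq_add] at h
    exact h

/-- The function `F_z(w) = ((w²−1)²/((w²−κ)(w²−1/κ))) · 1/(√κ(w²+1) − zw)` has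
simple poles at `w = ±1/√κ`, which lie inside the unit disc, with residues
`Res(F_z, ±κ^{−1/2}) = ±(1−κ)/(2(1+κ)(1+κ∓z))` (equation (4.11)). -/
theorem free_laplacian_contour_residues (κ : ℕ) (hκ : 2 ≤ κ) (z : ℂ)
    (hz1 : ‖z‖ < (κ : ℝ) + 1)
    (hz2 : ∀ t : ℝ, t ∈ Set.Icc (-(2 * Real.sqrt κ)) (2 * Real.sqrt κ) → z ≠ (t : ℂ)) :
    ‖(1 : ℂ) / (Real.sqrt κ : ℂ)‖ < 1 ∧
    Tendsto
      (fun w : ℂ => (w - 1 / (Real.sqrt κ : ℂ)) *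
        (((w ^ 2 - 1) ^ 2 / ((w ^ 2 - (κ : ℂ)) * (w ^ 2 - 1 / (κ : ℂ)))) *
          (1 / ((Real.sqrt κ : ℂ) * (w ^ 2 + 1) - z * w))))
      (𝓝[≠] (1 / (Real.sqrt κ : ℂ)))
      (𝓝 ((1 - (κ : ℂ)) / (2 * (1 + (κ : ℂ)) * (1 + (κ : ℂ) - z)))) ∧
    Tendsto
      (fun w : ℂ => (w + 1 / (Real.sqrt κ : ℂ)) *
        (((w ^ 2 - 1) ^ 2 / ((w ^ 2 - (κ : ℂ)) * (w ^ 2 - 1 / (κ : ℂ)))) *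
          (1 / ((Real.sqrt κ : ℂ) * (w ^ 2 + 1) - z * w))))
      (𝓝[≠] (-(1 / (Real.sqrt κ : ℂ))))
      (𝓝 (-((1 - (κ : ℂ)) / (2 * (1 + (κ : ℂ)) * (1 + (κ : ℂ) + z))))) :=
  free_laplacian_contour_residues_general κ hκ z hz1
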